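/- arXiv:2503.07628 — 6 statements merged into one kernel-verified Lean document; each statement's English description precedes it below -/
import Mathlib

section
/- For all real parameters α > 0 and β > 0 and all symmetric 2×2 real matrices T₁ ≠ T₂, the response function F(T) := (1 + (β‖T‖)^α)^{-1/α} · T is strictly monotone: (F(T₁) − F(T₂)) : (T₁ − T₂) > 0. -/
/-- The Frobenius inner product `A : B = ∑ᵢⱼ Aᵢⱼ Bᵢⱼ` on 2×2 real matrices. -/
noncomputable def frobInner (A B : Matrix (Fin 2) (Fin 2) ℝ) : ℝ :=
  ∑ i, ∑ j, A i j * B i j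

/-- The Frobenius norm `‖A‖ = √(A : A)`. -/
noncomputable def frobNorm (A : Matrix (Fin 2) (Fin 2) ℝ) : ℝ :=
  Real.sqrt (frobInner A A)

/-- The strain-limiting response function `F(T) = (1 + (β‖T‖)^α)^{-1/α} • T`. -/
noncomputable def slResponse (α β : ℝ) (T : Matrix (Fin 2) (Fin 2) ℝ) :
    Matrix (Fin 2) (Fin 2) ℝ :=
  ((1 + (β * frobNorm T) ^ α) ^ (-(1 / α))) • T

lemma sl_base_pos (α β r : ℝ) (hβ : 0 < β) (hr : 0 ≤ r) :
    0 < 1 + (β * r) ^ α := by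
  have : (0:ℝ) ≤ (β * r) ^ α := Real.rpow_nonneg (by positivity) α
  linarith

lemma sl_phi_pos (α β r : ℝ) (hβ : 0 < β) (hr : 0 ≤ r) :
    0 < (1 + (β * r) ^ α) ^ (-(1 / α)) :=
  Real.rpow_pos_of_pos (sl_base_pos α β r hβ hr) _

/-- `r ↦ φ(r) r` is strictly increasing on nonneg reals. -/
lemma sl_g_strictMono (α β : ℝ) (hα : 0 < α) (hβ : 0 < β)
    {x y : ℝ} (hx : 0 ≤ x) (hxy : x < y) :
    (1 + (β * x) ^ α) ^ (-(1 / α)) * x < (1 + (β * y) ^ α) ^ (-(1 / α)) * y := by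
  have hy : 0 < y := lt_of_le_of_lt hx hxy
  rcases eq_or_lt_of_le hx with h0 | hx0
  · rw [← h0, mul_zero]
    exact mul_pos (sl_phi_pos α β y hβ hy.le) hy
  -- now 0 < x < y
  have hbx : 0 < 1 + (β * x) ^ α := sl_base_pos α β x hβ hx
  have hby : 0 < 1 + (β * y) ^ α := sl_base_pos α β y hβ hy.le
  have hgx : 0 ≤ (1 + (β * x) ^ α) ^ (-(1 / α)) * x :=
    mul_nonneg (sl_phi_pos α β x hβ hx).le hx
  have hgy : 0 ≤ (1 + (β * y) ^ α) ^ (-(1 / α)) * y :=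
    mul_nonneg (sl_phi_pos α β y hβ hy.le).le hy.le
  have key : ∀ r : ℝ, 0 < r →
      ((1 + (β * r) ^ α) ^ (-(1 / α)) * r) ^ α = r ^ α / (1 + (β * r) ^ α) := by
    intro r hr
    have hb : 0 < 1 + (β * r) ^ α := sl_base_pos α β r hβ hr.le
    rw [Real.mul_rpow (Real.rpow_nonneg hb.le _) hr.le, ← Real.rpow_mul hb.le]
    have hexp : -(1 / α) * α = -1 := by field_simp
    rw [hexp, Real.rpow_neg_one]
    ring
  -- compare the α-th powers
  have hpow : ((1 + (β * x) ^ α) ^ (-(1 / α)) * x) ^ α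
      < ((1 + (β * y) ^ α) ^ (-(1 / α)) * y) ^ α := by
    rw [key x hx0, key y hy]
    rw [div_lt_div_iff₀ hbx hby]
    have hux : (β * x) ^ α = β ^ α * x ^ α := Real.mul_rpow hβ.le hx0.le
    have huy : (β * y) ^ α = β ^ α * y ^ α := Real.mul_rpow hβ.le hy.le
    have hxy' : x ^ α < y ^ α := Real.rpow_lt_rpow hx0.le hxy hα
    have hbp : 0 < β ^ α := Real.rpow_pos_of_pos hβ α
    rw [hux, huy]
    nlinarith [Real.rpow_pos_of_pos hx0 α]
  -- conclude
  by_contra h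
  push_neg at h
  exact absurd (Real.rpow_le_rpow hgy h hα.le) (not_le.mpr hpow)

lemma frobInner_self_nonneg (A : Matrix (Fin 2) (Fin 2) ℝ) : 0 ≤ frobInner A A := by
  simp only [frobInner, Fin.sum_univ_two]
  nlinarith [mul_self_nonneg (A 0 0), mul_self_nonneg (A 0 1),
    mul_self_nonneg (A 1 0), mul_self_nonneg (A 1 1)]

lemma frobInner_self_pos (A : Matrix (Fin 2) (Fin 2) ℝ) (hA : A ≠ 0) :
    0 < frobInner A A := by
  rcases (frobInner_self_nonneg A).lt_or_eq with h | h
  · exact h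
  · exfalso
    apply hA
    have h' := h.symm
    simp only [frobInner, Fin.sum_univ_two] at h'
    have n00 := mul_self_nonneg (A 0 0)
    have n01 := mul_self_nonneg (A 0 1)
    have n10 := mul_self_nonneg (A 1 0)
    have n11 := mul_self_nonneg (A 1 1)
    have h00 : A 0 0 = 0 := mul_self_eq_zero.mp (by linarith)
    have h01 : A 0 1 = 0 := mul_self_eq_zero.mp (by linarith)
    have h10 : A 1 0 = 0 := mul_self_eq_zero.mp (by linarith)
    have h11 : A 1 1 = 0 := mul_self_eq_zero.mp (by linarith)
    ext i j
    fin_cases i <;> fin_cases j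
    exacts [h00, h01, h10, h11]

lemma frobNorm_sq (A : Matrix (Fin 2) (Fin 2) ℝ) :
    frobNorm A * frobNorm A = frobInner A A :=
  Real.mul_self_sqrt (frobInner_self_nonneg A)

lemma frobInner_le (A B : Matrix (Fin 2) (Fin 2) ℝ) :
    frobInner A B ≤ frobNorm A * frobNorm B := by
  have hA := frobInner_self_nonneg A
  have hB := frobInner_self_nonneg B
  have hnA : 0 ≤ frobNorm A := Real.sqrt_nonneg _
  have hnB : 0 ≤ frobNorm B := Real.sqrt_nonneg _
  have hsq : frobInner A B ^ 2 ≤ frobInner A A * frobInner B B := by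
    simp only [frobInner, Fin.sum_univ_two]
    nlinarith [sq_nonneg (A 0 0 * B 0 1 - A 0 1 * B 0 0),
      sq_nonneg (A 0 0 * B 1 0 - A 1 0 * B 0 0),
      sq_nonneg (A 0 0 * B 1 1 - A 1 1 * B 0 0),
      sq_nonneg (A 0 1 * B 1 0 - A 1 0 * B 0 1),
      sq_nonneg (A 0 1 * B 1 1 - A 1 1 * B 0 1),
      sq_nonneg (A 1 0 * B 1 1 - A 1 1 * B 1 0)]
  have h2 : frobInner A B ^ 2 ≤ (frobNorm A * frobNorm B) ^ 2 := by
    have : (frobNorm A * frobNorm B) ^ 2 = frobInner A A * frobInner B B := by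
      rw [mul_pow, sq, sq, frobNorm_sq, frobNorm_sq]
    linarith [hsq, this.ge]
  nlinarith [mul_nonneg hnA hnB]

theorem stmt_2 (α β : ℝ) (hα : 0 < α) (hβ : 0 < β)
    (T₁ T₂ : Matrix (Fin 2) (Fin 2) ℝ) (hT₁ : T₁.IsSymm) (hT₂ : T₂.IsSymm)
    (hne : T₁ ≠ T₂) :
    0 < frobInner (slResponse α β T₁ - slResponse α β T₂) (T₁ - T₂) := by
  set a := frobNorm T₁ with ha_def
  set b := frobNorm T₂ with hb_def
  set p := (1 + (β * a) ^ α) ^ (-(1 / α)) with hp_def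
  set q := (1 + (β * b) ^ α) ^ (-(1 / α)) with hq_def
  have ha : 0 ≤ a := Real.sqrt_nonneg _
  have hb : 0 ≤ b := Real.sqrt_nonneg _
  have hp : 0 < p := sl_phi_pos α β a hβ ha
  have hq : 0 < q := sl_phi_pos α β b hβ hb
  have key : frobInner (slResponse α β T₁ - slResponse α β T₂) (T₁ - T₂)
      = p * frobInner T₁ T₁ + q * frobInner T₂ T₂ - (p + q) * frobInner T₁ T₂ := by
    simp only [frobInner, slResponse, ← ha_def, ← hb_def, ← hp_def, ← hq_def,
      Matrix.sub_apply, Matrix.smul_apply, smul_eq_mul, Fin.sum_univ_two]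
    ring
  have e1 : frobInner T₁ T₁ = a * a := (frobNorm_sq T₁).symm
  have e2 : frobInner T₂ T₂ = b * b := (frobNorm_sq T₂).symm
  have hcs : frobInner T₁ T₂ ≤ a * b := frobInner_le T₁ T₂
  rcases eq_or_ne a b with hab | hab
  · -- equal norms: p = q, expression = p * ‖T₁ - T₂‖²
    have hpq : p = q := by rw [hp_def, hq_def, hab]
    have hDpos : 0 < frobInner (T₁ - T₂) (T₁ - T₂) :=
      frobInner_self_pos _ (sub_ne_zero.mpr hne)
    have hD : frobInner (T₁ - T₂) (T₁ - T₂)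
        = frobInner T₁ T₁ + frobInner T₂ T₂ - 2 * frobInner T₁ T₂ := by
      simp only [frobInner, Fin.sum_univ_two, Matrix.sub_apply]
      ring
    have hmain := mul_pos hp hDpos
    rw [hD] at hmain
    rw [key, ← hpq]
    linarith [hmain]
  · -- distinct norms: use strict monotonicity
    have hsign : 0 < (a - b) * (p * a - q * b) := by
      rcases lt_or_gt_of_ne hab with h | h
      · have := sl_g_strictMono α β hα hβ ha h
        rw [← hp_def, ← hq_def] at this
        apply mul_pos_of_neg_of_neg <;> linarith
      · have := sl_g_strictMono α β hα hβ hb h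
        rw [← hp_def, ← hq_def] at this
        apply mul_pos <;> linarith
    have h2 : 0 ≤ (p + q) * (a * b - frobInner T₁ T₂) :=
      mul_nonneg (by linarith) (by linarith)
    rw [key, e1, e2]
    linarith [hsign, h2]
end

section
/- For all real parameters α > 0 and β > 0 there exists a constant L > 0 such that for all symmetric 2×2 real matrices T₁, T₂, the response function F(T) := (1 + (β‖T‖)^α)^{-1/α} · T satisfies the Lipschitz estimate ‖F(T₁) − F(T₂)‖ ≤ L ‖T₁ − T₂‖. -/
noncomputable def toE (A : Matrix (Fin 2) (Fin 2) ℝ) : EuclideanSpace ℝ (Fin 2 × Fin 2) :=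
  (WithLp.equiv 2 _).symm (fun p => A p.1 p.2)

lemma toE_sub (A B : Matrix (Fin 2) (Fin 2) ℝ) : toE (A - B) = toE A - toE B := rfl

lemma toE_smul (c : ℝ) (A : Matrix (Fin 2) (Fin 2) ℝ) : toE (c • A) = c • toE A := rfl

lemma toE_add (A B : Matrix (Fin 2) (Fin 2) ℝ) : toE (A + B) = toE A + toE B := rfl

lemma frobNorm_eq_norm (A : Matrix (Fin 2) (Fin 2) ℝ) : frobNorm A = ‖toE A‖ := by
  rw [EuclideanSpace.norm_eq]
  unfold frobNorm frobInner
  congr 1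
  rw [Fintype.sum_prod_type]
  simp [toE, Real.norm_eq_abs, sq_abs, sq]

lemma phi_pos (α β : ℝ) (hα : 0 < α) (hβ : 0 < β) (r : ℝ) (hr : 0 ≤ r) :
    0 < (1 + (β * r) ^ α) ^ (-(1 / α)) := by
  apply Real.rpow_pos_of_pos
  have := Real.rpow_nonneg (by positivity : (0:ℝ) ≤ β * r) α
  linarith

lemma phi_le_one (α β : ℝ) (hα : 0 < α) (hβ : 0 < β) (r : ℝ) (hr : 0 ≤ r) :
    (1 + (β * r) ^ α) ^ (-(1 / α)) ≤ 1 := by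
  apply Real.rpow_le_one_of_one_le_of_nonpos
  · have := Real.rpow_nonneg (by positivity : (0:ℝ) ≤ β * r) α
    linarith
  · have : 0 < 1/α := by positivity
    linarith

lemma phi_anti (α β : ℝ) (hα : 0 < α) (hβ : 0 < β) {r s : ℝ} (hr : 0 ≤ r) (hrs : r ≤ s) :
    (1 + (β * s) ^ α) ^ (-(1 / α)) ≤ (1 + (β * r) ^ α) ^ (-(1 / α)) := by
  apply Real.rpow_le_rpow_of_nonpos
  · have := Real.rpow_nonneg (by positivity : (0:ℝ) ≤ β * r) α
    linarith
  · have : (β*r)^α ≤ (β*s)^α :=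
      Real.rpow_le_rpow (by positivity) (by nlinarith) hα.le
    linarith
  · have : 0 < 1/α := by positivity
    linarith

lemma G_eq (α β : ℝ) (hα : 0 < α) (hβ : 0 < β) {r : ℝ} (hr : 0 < r) :
    (1 + (β * r) ^ α) ^ (-(1 / α)) * r = (r ^ (-α) + β ^ α) ^ (-(1 / α)) := by
  have h1 : (0:ℝ) ≤ 1 + (β * r) ^ α := by
    have := Real.rpow_nonneg (by positivity : (0:ℝ) ≤ β * r) α; linarith
  have hrα : r = (r ^ (-α)) ^ (-(1/α)) := by
    rw [← Real.rpow_mul hr.le]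
    have he : -α * -(1/α) = 1 := by field_simp
    rw [he, Real.rpow_one]
  calc (1 + (β * r) ^ α) ^ (-(1 / α)) * r
      = (1 + (β * r) ^ α) ^ (-(1 / α)) * (r ^ (-α)) ^ (-(1/α)) := by rw [← hrα]
    _ = ((1 + (β * r) ^ α) * r ^ (-α)) ^ (-(1/α)) := by
        rw [← Real.mul_rpow h1 (Real.rpow_nonneg hr.le _)]
    _ = (r ^ (-α) + β ^ α) ^ (-(1/α)) := by
        congr 1
        rw [add_mul, one_mul, Real.mul_rpow hβ.le hr.le, mul_assoc,
          ← Real.rpow_add hr, add_neg_cancel, Real.rpow_zero, mul_one]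

lemma G_mono (α β : ℝ) (hα : 0 < α) (hβ : 0 < β) {r s : ℝ} (hr : 0 ≤ r) (hrs : r ≤ s) :
    (1 + (β * r) ^ α) ^ (-(1 / α)) * r ≤ (1 + (β * s) ^ α) ^ (-(1 / α)) * s := by
  rcases hr.eq_or_lt with h | h
  · rw [← h, mul_zero]
    have := phi_pos α β hα hβ s (by linarith)
    nlinarith
  · have hs : 0 < s := lt_of_lt_of_le h hrs
    rw [G_eq α β hα hβ h, G_eq α β hα hβ hs]
    apply Real.rpow_le_rpow_of_nonpos
    · have := Real.rpow_pos_of_pos hs (-α)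
      have := Real.rpow_pos_of_pos hβ α
      linarith
    · have : s ^ (-α) ≤ r ^ (-α) :=
        Real.rpow_le_rpow_of_nonpos h hrs (by linarith)
      linarith
    · have : 0 < 1/α := by positivity
      linarith

lemma key (α β : ℝ) (hα : 0 < α) (hβ : 0 < β) (T₁ T₂ : Matrix (Fin 2) (Fin 2) ℝ)
    (h : frobNorm T₂ ≤ frobNorm T₁) :
    frobNorm (slResponse α β T₁ - slResponse α β T₂) ≤ 2 * frobNorm (T₁ - T₂) := by
  set a := frobNorm T₁ with ha_def
  set b := frobNorm T₂ with hb_def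
  have hb : 0 ≤ b := Real.sqrt_nonneg _
  have ha : 0 ≤ a := Real.sqrt_nonneg _
  set φa := (1 + (β * a) ^ α) ^ (-(1 / α)) with hφa_def
  set φb := (1 + (β * b) ^ α) ^ (-(1 / α)) with hφb_def
  have hdec : slResponse α β T₁ - slResponse α β T₂
      = φa • (T₁ - T₂) + (φa - φb) • T₂ := by
    unfold slResponse
    rw [← ha_def, ← hb_def, ← hφa_def, ← hφb_def]
    module
  have hφa_pos : 0 < φa := phi_pos α β hα hβ a ha
  have hφa_le : φa ≤ 1 := phi_le_one α β hα hβ a ha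
  have hφab : φa ≤ φb := phi_anti α β hα hβ hb h
  have hG : φb * b ≤ φa * a := by
    have := G_mono α β hα hβ hb h
    linarith
  set D := frobNorm (T₁ - T₂) with hD_def
  have hD : 0 ≤ D := Real.sqrt_nonneg _
  have hab : a - b ≤ D := by
    have : a - b ≤ ‖toE T₁ - toE T₂‖ := by
      rw [ha_def, hb_def, frobNorm_eq_norm, frobNorm_eq_norm]
      exact norm_sub_norm_le _ _
    rw [hD_def, frobNorm_eq_norm, toE_sub] at *
    linarith
  have hbound : frobNorm (φa • (T₁ - T₂) + (φa - φb) • T₂)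
      ≤ φa * D + (φb - φa) * b := by
    rw [frobNorm_eq_norm, toE_add, toE_smul, toE_smul]
    calc ‖φa • toE (T₁ - T₂) + (φa - φb) • toE T₂‖
        ≤ ‖φa • toE (T₁ - T₂)‖ + ‖(φa - φb) • toE T₂‖ := norm_add_le _ _
      _ = |φa| * ‖toE (T₁ - T₂)‖ + |φa - φb| * ‖toE T₂‖ := by
          rw [norm_smul, norm_smul, Real.norm_eq_abs, Real.norm_eq_abs]
      _ = φa * D + (φb - φa) * b := by
          rw [abs_of_pos hφa_pos, abs_of_nonpos (by linarith), hD_def,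
            frobNorm_eq_norm, hb_def, frobNorm_eq_norm]
          ring
  rw [hdec]
  nlinarith [hbound]

theorem stmt_4 (α β : ℝ) (hα : 0 < α) (hβ : 0 < β) :
    ∃ L : ℝ, 0 < L ∧
      ∀ T₁ T₂ : Matrix (Fin 2) (Fin 2) ℝ, T₁.IsSymm → T₂.IsSymm →
        frobNorm (slResponse α β T₁ - slResponse α β T₂) ≤ L * frobNorm (T₁ - T₂) := by
  refine ⟨2, two_pos, fun T₁ T₂ _ _ => ?_⟩
  rcases le_total (frobNorm T₂) (frobNorm T₁) with h | h
  · exact key α β hα hβ T₁ T₂ h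
  · have h1 : frobNorm (slResponse α β T₂ - slResponse α β T₁)
        ≤ 2 * frobNorm (T₂ - T₁) := key α β hα hβ T₂ T₁ h
    have e1 : frobNorm (slResponse α β T₁ - slResponse α β T₂)
        = frobNorm (slResponse α β T₂ - slResponse α β T₁) := by
      rw [frobNorm_eq_norm, frobNorm_eq_norm, toE_sub, toE_sub, norm_sub_rev]
    have e2 : frobNorm (T₁ - T₂) = frobNorm (T₂ - T₁) := by
      rw [frobNorm_eq_norm, frobNorm_eq_norm, toE_sub, toE_sub, norm_sub_rev]
    rw [e1, e2]
    exact h1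
end

section
/- For all real parameters α > 0 and β > 0, the response function F(T) := (1 + (β‖T‖)^α)^{-1/α} · T is injective on the symmetric 2×2 real matrices. -/
lemma frobNorm_nonneg (A : Matrix (Fin 2) (Fin 2) ℝ) : 0 ≤ frobNorm A :=
  Real.sqrt_nonneg _

lemma frobNorm_smul (c : ℝ) (A : Matrix (Fin 2) (Fin 2) ℝ) :
    frobNorm (c • A) = |c| * frobNorm A := by
  have h : frobInner (c • A) (c • A) = c ^ 2 * frobInner A A := by
    simp [frobInner, Matrix.smul_apply, smul_eq_mul, Fin.sum_univ_two]
    ring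
  rw [frobNorm, h, Real.sqrt_mul (sq_nonneg c), Real.sqrt_sq_eq_abs, frobNorm]

theorem stmt_6 (α β : ℝ) (hα : 0 < α) (hβ : 0 < β) :
    Set.InjOn (slResponse α β) {T : Matrix (Fin 2) (Fin 2) ℝ | T.IsSymm} := by
  intro T1 _ T2 _ heq
  set n1 := frobNorm T1 with hn1
  set n2 := frobNorm T2 with hn2
  have hn1' : 0 ≤ n1 := frobNorm_nonneg T1
  have hn2' : 0 ≤ n2 := frobNorm_nonneg T2
  set u1 := (β * n1) ^ α with hu1
  set u2 := (β * n2) ^ α with hu2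
  have hu1' : 0 ≤ u1 := Real.rpow_nonneg (by positivity) α
  have hu2' : 0 ≤ u2 := Real.rpow_nonneg (by positivity) α
  set c1 := (1 + u1) ^ (-(1 / α)) with hc1
  set c2 := (1 + u2) ^ (-(1 / α)) with hc2
  have hb1 : (0:ℝ) < 1 + u1 := by linarith
  have hb2 : (0:ℝ) < 1 + u2 := by linarith
  have hc1' : 0 < c1 := Real.rpow_pos_of_pos hb1 _
  have hc2' : 0 < c2 := Real.rpow_pos_of_pos hb2 _
  -- norms of both sides
  have hnorm : c1 * n1 = c2 * n2 := by
    have := congrArg frobNorm heq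
    rwa [slResponse, slResponse, frobNorm_smul, frobNorm_smul, ← hn1, ← hn2,
      abs_of_pos hc1', abs_of_pos hc2'] at this
  -- c_i ^ α = (1 + u_i)⁻¹
  have hcpow : ∀ u : ℝ, 0 ≤ u → ((1 + u) ^ (-(1/α))) ^ α = (1 + u)⁻¹ := by
    intro u hu
    rw [← Real.rpow_mul (by linarith), show -(1/α) * α = -1 by field_simp,
      Real.rpow_neg_one]
  have key : u1 / (1 + u1) = u2 / (1 + u2) := by
    have h1 : (β * (c1 * n1)) ^ α = u1 / (1 + u1) := by
      rw [Real.mul_rpow hβ.le (by positivity), Real.mul_rpow hc1'.le hn1',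
        hcpow u1 hu1']
      have hsplit : u1 = β ^ α * n1 ^ α := Real.mul_rpow hβ.le hn1'
      rw [div_eq_mul_inv, hsplit]; ring
    have h2 : (β * (c2 * n2)) ^ α = u2 / (1 + u2) := by
      rw [Real.mul_rpow hβ.le (by positivity), Real.mul_rpow hc2'.le hn2',
        hcpow u2 hu2']
      have hsplit : u2 = β ^ α * n2 ^ α := Real.mul_rpow hβ.le hn2'
      rw [div_eq_mul_inv, hsplit]; ring
    rw [← h1, ← h2, hnorm]
  have huu : u1 = u2 := by
    field_simp at key
    nlinarith
  have hnn : n1 = n2 := by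
    have : β * n1 = β * n2 := by
      have h := Real.rpow_left_injOn (x := α) (ne_of_gt hα)
      exact h (show 0 ≤ β * n1 by positivity) (show 0 ≤ β * n2 by positivity) huu
    exact mul_left_cancel₀ (ne_of_gt hβ) this
  have hcc : c1 = c2 := by
    have : (1:ℝ) + u1 = 1 + u2 := by rw [huu]
    rw [hc1, hc2, this]
  have h' : c1 • T1 = c2 • T2 := heq
  rw [← hcc] at h'
  exact smul_right_injective _ (ne_of_gt hc1') h'
end

section
/- For all real parameters α > 0 and β > 0, the scalar map φ(t) = t / (1 + (βt)^α)^{1/α} is a bijection from [0,∞) onto the half-open interval [0, 1/β). -/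
/-- The scalar strain-limiting profile `φ(t) = t / (1 + (βt)^α)^{1/α}`. -/
noncomputable def slProfile (α β t : ℝ) : ℝ :=
  t / (1 + (β * t) ^ α) ^ (1 / α)

/-! On `[0, ∞)` the profile factors as
`φ(t) = β⁻¹ · ψ(βt)` with `ψ(x) = (x^α / (1 + x^α))^{1/α}`, i.e. as the composite
`t ↦ βt ↦ (βt)^α ↦ u / (1 + u) ↦ v^{1/α} ↦ β⁻¹ w` of the bijections
`[0,∞) → [0,∞) → [0,∞) → [0,1) → [0,1) → [0, 1/β)`. -/

open Set

theorem Set.bijOn_mul_left_Ici {G₀ : Type*} [GroupWithZero G₀] [PartialOrder G₀]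
    [PosMulReflectLT G₀] {a : G₀} (ha : 0 < a) (b : G₀) :
    BijOn (a * ·) (Ici b) (Ici (a * b)) := by
  rw [← image_mul_left_Ici ha]
  exact (mul_right_injective₀ ha.ne').injOn.bijOn_image

theorem Set.bijOn_mul_left_Ico {G₀ : Type*} [GroupWithZero G₀] [PartialOrder G₀]
    [PosMulReflectLT G₀] {a : G₀} (ha : 0 < a) (b c : G₀) :
    BijOn (a * ·) (Ico b c) (Ico (a * b) (a * c)) := by
  rw [← image_mul_left_Ico ha]
  exact (mul_right_injective₀ ha.ne').injOn.bijOn_image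

namespace Real

theorem bijOn_rpow_Ici_zero {p : ℝ} (hp : p ≠ 0) :
    BijOn (fun x : ℝ => x ^ p) (Ici 0) (Ici 0) :=
  InvOn.bijOn (f' := fun y => y ^ p⁻¹)
    ⟨fun _ hx => rpow_rpow_inv hx hp, fun _ hy => rpow_inv_rpow hy hp⟩
    (fun _ hx => rpow_nonneg hx p) (fun _ hy => rpow_nonneg hy p⁻¹)

theorem bijOn_rpow_Ico_zero {p a : ℝ} (hp : 0 < p) (ha : 0 ≤ a) :
    BijOn (fun x : ℝ => x ^ p) (Ico 0 a) (Ico 0 (a ^ p)) :=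
  InvOn.bijOn (f' := fun y => y ^ p⁻¹)
    ⟨fun _ hx => rpow_rpow_inv hx.1 hp.ne', fun _ hy => rpow_inv_rpow hy.1 hp.ne'⟩
    (fun _ hx => ⟨rpow_nonneg hx.1 p, rpow_lt_rpow hx.1 hx.2 hp⟩)
    (fun _ hy => ⟨rpow_nonneg hy.1 p⁻¹, (rpow_inv_lt_iff_of_pos hy.1 ha hp).2 hy.2⟩)

end Real

theorem bijOn_div_one_add_self_Ici_zero :
    BijOn (fun u : ℝ => u / (1 + u)) (Ici 0) (Ico 0 1) := by
  refine InvOn.bijOn (f' := fun v => v / (1 - v)) ⟨fun u (hu : 0 ≤ u) => ?_, fun v hv => ?_⟩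
    (fun u (hu : 0 ≤ u) => ⟨by positivity, (div_lt_one (by positivity)).2 (by linarith)⟩)
    (fun v hv => div_nonneg hv.1 (by linarith [hv.2]))
  · have : 1 + u ≠ 0 := by positivity
    field_simp
    ring
  · have : 1 - v ≠ 0 := by linarith [hv.2]
    field_simp
    ring

theorem slProfile_eq_inv_mul_slProfile_one {β : ℝ} (α t : ℝ) (hβ : β ≠ 0) :
    slProfile α β t = β⁻¹ * slProfile α 1 (β * t) := by
  rw [slProfile, slProfile, one_mul, mul_div_assoc', inv_mul_cancel_left₀ hβ]

theorem slProfile_one_eq_rpow {α x : ℝ} (hα : α ≠ 0) (hx : 0 ≤ x) :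
    slProfile α 1 x = (x ^ α / (1 + x ^ α)) ^ (1 / α) := by
  have hxα : 0 ≤ x ^ α := Real.rpow_nonneg hx α
  rw [slProfile, one_mul, Real.div_rpow hxα (by positivity), one_div, Real.rpow_rpow_inv hx hα]

theorem bijOn_slProfile_one {α : ℝ} (hα : 0 < α) :
    BijOn (slProfile α 1) (Ici 0) (Ico 0 1) := by
  have hroot : BijOn (fun v : ℝ => v ^ (1 / α)) (Ico 0 1) (Ico 0 1) := by
    simpa using Real.bijOn_rpow_Ico_zero (one_div_pos.2 hα) zero_le_one
  refine (hroot.comp (bijOn_div_one_add_self_Ici_zero.comp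
    (Real.bijOn_rpow_Ici_zero hα.ne'))).congr fun x hx => ?_
  exact (slProfile_one_eq_rpow hα.ne' hx).symm

theorem stmt_9 (α β : ℝ) (hα : 0 < α) (hβ : 0 < β) :
    Set.BijOn (slProfile α β) (Set.Ici 0) (Set.Ico 0 (1 / β)) := by
  have hscale : BijOn (β * ·) (Ici 0) (Ici 0) := by
    simpa using bijOn_mul_left_Ici hβ 0
  have hunscale : BijOn (β⁻¹ * ·) (Ico 0 1) (Ico 0 (1 / β)) := by
    simpa using bijOn_mul_left_Ico (inv_pos.2 hβ) 0 1
  refine (hunscale.comp ((bijOn_slProfile_one hα).comp hscale)).congr fun t _ => ?_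
  exact (slProfile_eq_inv_mul_slProfile_one α t hβ.ne').symm
end

section
/- Let α > 0, β > 0 and let 0 < c₁ < 1/β. Then there exists a constant c₂ > 0 such that for all vectors ω₁, ω₂ ∈ ℝ² with |ω₁| ≤ c₁ and |ω₂| ≤ c₁, the map ω ↦ Ψ(|ω|) ω with Ψ(s) = (1 − (βs)^α)^{-1/α} satisfies the Lipschitz estimate |Ψ(|ω₁|) ω₁ − Ψ(|ω₂|) ω₂| ≤ c₂ |ω₁ − ω₂|. -/
/-!
Write `s = |ω₁| ≥ t = |ω₂|` and split
`Ψ(s) ω₁ - Ψ(t) ω₂ = Ψ(s) (ω₁ - ω₂) + (Ψ(s) - Ψ(t)) ω₂`.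
The first term is controlled by the bound `Ψ ≤ (1 - (βc₁)^α)^{-1/α}`. For `α < 1` the factor `Ψ`
is not Lipschitz at `0`, but the weight `|ω₂| = t` saves the second term: `u ↦ (1 - u)^{-1/α}` is
Lipschitz away from `u = 1`, and `t (s^α - t^α) ≤ α c₁^α (s - t)` by the mean value theorem, since
`t x^{α-1} ≤ x^α ≤ c₁^α` for `x ≥ t`.
-/

/-- The hyperelastic inversion factor `Ψ(s) = (1 − (βs)^α)^{-1/α}`. -/
noncomputable def Psi (α β s : ℝ) : ℝ :=
  (1 - (β * s) ^ α) ^ (-(1 / α))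

open Set

namespace Real

theorem abs_rpow_sub_rpow_le_of_le_one {q m a b : ℝ} (hq : q ≤ 1) (hm : 0 < m) (hma : m ≤ a)
    (hab : a ≤ b) : |b ^ q - a ^ q| ≤ |q| * m ^ (q - 1) * (b - a) := by
  have hpos : ∀ x ∈ Icc a b, 0 < x := fun x hx => hm.trans_le (hma.trans hx.1)
  have h := (convex_Icc a b).norm_image_sub_le_of_norm_hasDerivWithin_le
    (f := fun x => x ^ q) (f' := fun x => q * x ^ (q - 1)) (C := |q| * m ^ (q - 1))
    (fun x hx => (hasDerivAt_rpow_const (Or.inl (hpos x hx).ne')).hasDerivWithinAt)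
    (fun x hx => ?_) (left_mem_Icc.2 hab) (right_mem_Icc.2 hab)
  · simpa only [norm_eq_abs, abs_of_nonneg (sub_nonneg.2 hab)] using h
  · rw [norm_mul, norm_eq_abs, norm_eq_abs, abs_of_pos (rpow_pos_of_pos (hpos x hx) _)]
    exact mul_le_mul_of_nonneg_left
      (rpow_le_rpow_of_nonpos hm (hma.trans hx.1) (by linarith)) (abs_nonneg q)

theorem mul_rpow_sub_rpow_le {α c s t : ℝ} (hα : 0 < α) (ht : 0 ≤ t) (hts : t ≤ s)
    (hsc : s ≤ c) : t * (s ^ α - t ^ α) ≤ α * c ^ α * (s - t) := by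
  rcases ht.eq_or_lt with rfl | ht
  · rw [zero_mul]
    exact mul_nonneg (mul_nonneg hα.le (rpow_nonneg (hts.trans hsc) α)) (by linarith)
  have hpos : ∀ x ∈ Icc t s, 0 < x := fun x hx => ht.trans_le hx.1
  have h := (convex_Icc t s).norm_image_sub_le_of_norm_hasDerivWithin_le
    (f := fun x => x ^ α) (f' := fun x => α * x ^ (α - 1)) (C := α * c ^ α / t)
    (fun x hx => (hasDerivAt_rpow_const (Or.inl (hpos x hx).ne')).hasDerivWithinAt)
    (fun x hx => ?_) (left_mem_Icc.2 hts) (right_mem_Icc.2 hts)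
  · have hmono : t ^ α ≤ s ^ α := rpow_le_rpow ht.le hts hα.le
    simp only [norm_eq_abs, abs_of_nonneg (sub_nonneg.2 hmono),
      abs_of_nonneg (sub_nonneg.2 hts)] at h
    calc t * (s ^ α - t ^ α) ≤ t * (α * c ^ α / t * (s - t)) := by gcongr
      _ = α * c ^ α * (s - t) := by field_simp
  · have hx0 := hpos x hx
    have hxc : x ^ α / x ≤ c ^ α / t :=
      div_le_div₀ (rpow_nonneg (hx0.le.trans (hx.2.trans hsc)) α)
        (rpow_le_rpow hx0.le (hx.2.trans hsc) hα.le) ht hx.1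
    rw [norm_eq_abs, abs_of_nonneg (by positivity), rpow_sub hx0, rpow_one, mul_div_assoc]
    gcongr

end Real

section Radial

variable {E : Type*} [NormedAddCommGroup E] [NormedSpace ℝ E] {g : ℝ → ℝ} {c M L : ℝ}

theorem norm_smul_sub_smul_le_of_norm_le (hM : ∀ s, 0 ≤ s → s ≤ c → |g s| ≤ M) (hL₀ : 0 ≤ L)
    (hL : ∀ s t, 0 ≤ t → t ≤ s → s ≤ c → t * |g s - g t| ≤ L * (s - t))
    {x y : E} (hx : ‖x‖ ≤ c) (hyx : ‖y‖ ≤ ‖x‖) :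
    ‖g ‖x‖ • x - g ‖y‖ • y‖ ≤ (M + L) * ‖x - y‖ := by
  have hsplit : g ‖x‖ • x - g ‖y‖ • y = g ‖x‖ • (x - y) + (g ‖x‖ - g ‖y‖) • y := by module
  calc ‖g ‖x‖ • x - g ‖y‖ • y‖ ≤ |g ‖x‖| * ‖x - y‖ + ‖y‖ * |g ‖x‖ - g ‖y‖| := by
        rw [hsplit, mul_comm ‖y‖, ← Real.norm_eq_abs, ← Real.norm_eq_abs, ← norm_smul,
          ← norm_smul]
        exact norm_add_le _ _
    _ ≤ M * ‖x - y‖ + L * (‖x‖ - ‖y‖) :=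
        add_le_add (mul_le_mul_of_nonneg_right (hM _ (norm_nonneg _) hx) (norm_nonneg _))
          (hL _ _ (norm_nonneg _) hyx hx)
    _ ≤ M * ‖x - y‖ + L * ‖x - y‖ := by gcongr; exact norm_sub_norm_le x y
    _ = (M + L) * ‖x - y‖ := by ring

theorem norm_smul_sub_smul_le (hM : ∀ s, 0 ≤ s → s ≤ c → |g s| ≤ M) (hL₀ : 0 ≤ L)
    (hL : ∀ s t, 0 ≤ t → t ≤ s → s ≤ c → t * |g s - g t| ≤ L * (s - t))
    {x y : E} (hx : ‖x‖ ≤ c) (hy : ‖y‖ ≤ c) :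
    ‖g ‖x‖ • x - g ‖y‖ • y‖ ≤ (M + L) * ‖x - y‖ := by
  rcases le_total ‖y‖ ‖x‖ with h | h
  · exact norm_smul_sub_smul_le_of_norm_le hM hL₀ hL hx h
  · rw [norm_sub_rev, norm_sub_rev x]
    exact norm_smul_sub_smul_le_of_norm_le hM hL₀ hL hy h

end Radial

section Psi

variable {α β c s t : ℝ}

theorem rpow_mul_le_rpow_mul (hα : 0 < α) (hβ : 0 ≤ β) (hs : 0 ≤ s) (hsc : s ≤ c) :
    (β * s) ^ α ≤ (β * c) ^ α :=
  Real.rpow_le_rpow (mul_nonneg hβ hs) (mul_le_mul_of_nonneg_left hsc hβ) hα.le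

theorem abs_Psi_le (hα : 0 < α) (hβ : 0 ≤ β) (hβc : (β * c) ^ α < 1) (hs : 0 ≤ s)
    (hsc : s ≤ c) : |Psi α β s| ≤ (1 - (β * c) ^ α) ^ (-(1 / α)) := by
  have hbase := sub_pos.2 hβc
  have hmono := rpow_mul_le_rpow_mul hα hβ hs hsc
  rw [Psi, abs_of_nonneg (Real.rpow_nonneg (by linarith) _)]
  exact Real.rpow_le_rpow_of_nonpos hbase (by linarith) (neg_nonpos.2 (by positivity))

theorem mul_abs_Psi_sub_Psi_le (hα : 0 < α) (hβ : 0 ≤ β) (hβc : (β * c) ^ α < 1)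
    (ht : 0 ≤ t) (hts : t ≤ s) (hsc : s ≤ c) :
    t * |Psi α β s - Psi α β t| ≤
      (β * c) ^ α * (1 - (β * c) ^ α) ^ (-(1 / α) - 1) * (s - t) := by
  have hs : 0 ≤ s := ht.trans hts
  have hc : 0 ≤ c := hs.trans hsc
  set K := (1 - (β * c) ^ α) ^ (-(1 / α) - 1)
  have hlip := Real.abs_rpow_sub_rpow_le_of_le_one (q := -(1 / α)) (a := 1 - (β * s) ^ α)
    (b := 1 - (β * t) ^ α) (by linarith [one_div_pos.2 hα]) (sub_pos.2 hβc)
    (by linarith [rpow_mul_le_rpow_mul hα hβ hs hsc])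
    (by linarith [rpow_mul_le_rpow_mul hα hβ ht hts])
  have hdiff : 1 - (β * t) ^ α - (1 - (β * s) ^ α) = β ^ α * (s ^ α - t ^ α) := by
    rw [Real.mul_rpow hβ hs, Real.mul_rpow hβ ht]; ring
  rw [abs_neg, abs_of_pos (one_div_pos.2 hα), hdiff, abs_sub_comm] at hlip
  calc t * |Psi α β s - Psi α β t| ≤ t * (1 / α * K * (β ^ α * (s ^ α - t ^ α))) := by
        gcongr; exact hlip
    _ = 1 / α * K * β ^ α * (t * (s ^ α - t ^ α)) := by ring
    _ ≤ 1 / α * K * β ^ α * (α * c ^ α * (s - t)) := by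
        have := Real.mul_rpow_sub_rpow_le hα ht hts hsc
        gcongr
    _ = (β * c) ^ α * K * (s - t) := by
        rw [Real.mul_rpow hβ hc]; field_simp

end Psi

theorem stmt_12 (α β c₁ : ℝ) (hα : 0 < α) (hβ : 0 < β)
    (hc₁ : 0 < c₁) (hc₁' : c₁ < 1 / β) :
    ∃ c₂ : ℝ, 0 < c₂ ∧
      ∀ ω₁ ω₂ : EuclideanSpace ℝ (Fin 2), ‖ω₁‖ ≤ c₁ → ‖ω₂‖ ≤ c₁ →
        ‖Psi α β ‖ω₁‖ • ω₁ - Psi α β ‖ω₂‖ • ω₂‖ ≤ c₂ * ‖ω₁ - ω₂‖ := by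
  have hβc : β * c₁ < 1 := by rwa [lt_div_iff₀ hβ, mul_comm] at hc₁'
  have hu : (β * c₁) ^ α < 1 := Real.rpow_lt_one (by positivity) hβc hα
  have hbase : 0 < 1 - (β * c₁) ^ α := sub_pos.2 hu
  have hL₀ : 0 ≤ (β * c₁) ^ α * (1 - (β * c₁) ^ α) ^ (-(1 / α) - 1) :=
    mul_nonneg (Real.rpow_nonneg (by positivity) _) (Real.rpow_nonneg hbase.le _)
  refine ⟨_, add_pos_of_pos_of_nonneg (Real.rpow_pos_of_pos hbase _) hL₀,
    fun ω₁ ω₂ h₁ h₂ => norm_smul_sub_smul_le (fun s hs hsc => abs_Psi_le hα hβ.le hu hs hsc)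
      hL₀ (fun s t ht hts hsc => mul_abs_Psi_sub_Psi_le hα hβ.le hu ht hts hsc) h₁ h₂⟩
end

section
/- Let α > 0, β > 0 and let 0 < c₁ < 1/β. Then there exists a constant c₃ > 0 such that for all vectors ω₁, ω₂ ∈ ℝ² with |ω₁| ≤ c₁ and |ω₂| ≤ c₁, the map ω ↦ Ψ(|ω|) ω with Ψ(s) = (1 − (βs)^α)^{-1/α} satisfies the strong monotonicity estimate ⟨Ψ(|ω₁|) ω₁ − Ψ(|ω₂|) ω₂, ω₁ − ω₂⟩ ≥ c₃ |ω₁ − ω₂|². -/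
open scoped RealInnerProductSpace

lemma psi_pos_base {α β s : ℝ} (hα : 0 < α) (hβ : 0 < β) (hs : 0 ≤ s) (h : β * s < 1) :
    0 < 1 - (β * s) ^ α := by
  have := Real.rpow_lt_one (mul_nonneg hβ.le hs) h hα
  linarith

lemma psi_one_le {α β s : ℝ} (hα : 0 < α) (hβ : 0 < β) (hs : 0 ≤ s) (h : β * s < 1) :
    1 ≤ Psi α β s := by
  apply Real.one_le_rpow_of_pos_of_le_one_of_nonpos (psi_pos_base hα hβ hs h)
  · have := Real.rpow_nonneg (mul_nonneg hβ.le hs) α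
    linarith
  · have : 0 < 1 / α := by positivity
    linarith

lemma psi_mono {α β s t : ℝ} (hα : 0 < α) (hβ : 0 < β) (hs : 0 ≤ s) (hst : s ≤ t)
    (ht : β * t < 1) : Psi α β s ≤ Psi α β t := by
  have hxy : 1 - (β * t) ^ α ≤ 1 - (β * s) ^ α := by
    have := Real.rpow_le_rpow (mul_nonneg hβ.le hs)
      (mul_le_mul_of_nonneg_left hst hβ.le) hα.le
    linarith
  have hx : 0 < 1 - (β * t) ^ α := psi_pos_base hα hβ (hs.trans hst) ht
  exact Real.rpow_le_rpow_of_nonpos hx hxy (neg_nonpos.mpr (by positivity))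

theorem stmt_13 (α β c₁ : ℝ) (hα : 0 < α) (hβ : 0 < β)
    (hc₁ : 0 < c₁) (hc₁' : c₁ < 1 / β) :
    ∃ c₃ : ℝ, 0 < c₃ ∧
      ∀ ω₁ ω₂ : EuclideanSpace ℝ (Fin 2), ‖ω₁‖ ≤ c₁ → ‖ω₂‖ ≤ c₁ →
        ⟪Psi α β ‖ω₁‖ • ω₁ - Psi α β ‖ω₂‖ • ω₂, ω₁ - ω₂⟫ ≥ c₃ * ‖ω₁ - ω₂‖ ^ 2 := by
  refine ⟨1, one_pos, fun ω₁ ω₂ h₁ h₂ => ?_⟩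
  have hbc : β * c₁ < 1 := by
    rw [lt_div_iff₀ hβ] at hc₁'; linarith [hc₁']
  set r := ‖ω₁‖ with hr
  set s := ‖ω₂‖ with hs
  have hr0 : 0 ≤ r := norm_nonneg _
  have hs0 : 0 ≤ s := norm_nonneg _
  have hbr : β * r < 1 := lt_of_le_of_lt (mul_le_mul_of_nonneg_left h₁ hβ.le) hbc
  have hbs : β * s < 1 := lt_of_le_of_lt (mul_le_mul_of_nonneg_left h₂ hβ.le) hbc
  set f₁ := Psi α β r with hf₁
  set f₂ := Psi α β s with hf₂
  have hf₁1 : 1 ≤ f₁ := psi_one_le hα hβ hr0 hbr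
  have hf₂1 : 1 ≤ f₂ := psi_one_le hα hβ hs0 hbs
  have expand : ⟪f₁ • ω₁ - f₂ • ω₂, ω₁ - ω₂⟫ =
      f₁ * r ^ 2 + f₂ * s ^ 2 - (f₁ + f₂) * ⟪ω₁, ω₂⟫ := by
    simp only [inner_sub_left, inner_sub_right, real_inner_smul_left,
      real_inner_self_eq_norm_sq, real_inner_comm ω₂ ω₁]
    ring
  have hnorm : ‖ω₁ - ω₂‖ ^ 2 = r ^ 2 - 2 * ⟪ω₁, ω₂⟫ + s ^ 2 := norm_sub_sq_real ω₁ ω₂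
  have hp : ⟪ω₁, ω₂⟫ ≤ r * s := real_inner_le_norm ω₁ ω₂
  set p := (⟪ω₁, ω₂⟫ : ℝ) with hpdef
  have h2 : 0 ≤ (f₁ + f₂ - 2) * (r * s - p) :=
    mul_nonneg (by linarith) (by linarith)
  rw [expand, hnorm]
  rcases le_total s r with hsr | hrs
  · have hff : f₂ ≤ f₁ := psi_mono hα hβ hs0 hsr hbr
    have h1 : 0 ≤ (r - s) * ((f₁ - 1) * r - (f₂ - 1) * s) := by
      apply mul_nonneg (by linarith)
      nlinarith
    nlinarith
  · have hff : f₁ ≤ f₂ := psi_mono hα hβ hr0 hrs hbs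
    have h1 : 0 ≤ (s - r) * ((f₂ - 1) * s - (f₁ - 1) * r) := by
      apply mul_nonneg (by linarith)
      nlinarith
    nlinarith
end
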